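/- arXiv:2512.15375 — 8 statements merged into one kernel-verified Lean document; each statement's English description precedes it below -/
import Mathlib

section
/- Let G be a group and ψ : G → ℝ a function whose coboundary δψ is 1-bounded, i.e. for every f ∈ G there is a constant C such that |ψ(g) − ψ(f g) + ψ(f)| ≤ C for all g ∈ G. Let f ∈ G satisfy limsup_{k→∞} |ψ(f^k)|/k > 0. Then f is undistorted in G: for every finite subset S ⊆ G whose generated subgroup contains f, limsup_{k→∞} |f^k|_S / k > 0. -/
/-- The word length of `f` with respect to a finite subset `S`: the least `m`
such that `f` is a product of `m` elements of `S ∪ S⁻¹`. -/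
noncomputable def wordLength {G : Type*} [Group G] (S : Finset G) (f : G) : ℕ :=
  sInf {m : ℕ | ∃ l : List G, l.length = m ∧ (∀ s ∈ l, s ∈ S ∨ s⁻¹ ∈ S) ∧ l.prod = f}

/-- Every element of the closure of `S` has a representing word. -/
lemma exists_word {G : Type*} [Group G] {S : Finset G} {g : G}
    (hg : g ∈ Subgroup.closure (S : Set G)) :
    ∃ l : List G, (∀ s ∈ l, s ∈ S ∨ s⁻¹ ∈ S) ∧ l.prod = g := by
  rw [← Subgroup.mem_toSubmonoid, Subgroup.closure_toSubmonoid] at hg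
  obtain ⟨l, hl1, hl2⟩ := Submonoid.exists_list_of_mem_closure hg
  refine ⟨l, fun s hs => ?_, hl2⟩
  rcases hl1 s hs with h | h
  · exact Or.inl h
  · exact Or.inr (by simpa using h)

lemma exists_min_word {G : Type*} [Group G] {S : Finset G} {g : G}
    (hg : g ∈ Subgroup.closure (S : Set G)) :
    ∃ l : List G, l.length = wordLength S g ∧ (∀ s ∈ l, s ∈ S ∨ s⁻¹ ∈ S) ∧ l.prod = g := by
  obtain ⟨l, hl1, hl2⟩ := exists_word hg
  exact Nat.sInf_mem (⟨l.length, l, rfl, hl1, hl2⟩ :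
    {m : ℕ | ∃ l : List G, l.length = m ∧ (∀ s ∈ l, s ∈ S ∨ s⁻¹ ∈ S) ∧ l.prod = g}.Nonempty)

lemma wordLength_pow_le {G : Type*} [Group G] {S : Finset G} {f : G}
    (hf : f ∈ Subgroup.closure (S : Set G)) (k : ℕ) :
    wordLength S (f ^ k) ≤ k * wordLength S f := by
  obtain ⟨l, hlen, hmem, hprod⟩ := exists_min_word hf
  induction k with
  | zero =>
    have h0 : (0:ℕ) ∈ {m : ℕ | ∃ l : List G,
        l.length = m ∧ (∀ s ∈ l, s ∈ S ∨ s⁻¹ ∈ S) ∧ l.prod = f ^ 0} :=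
      ⟨[], rfl, by simp, by simp⟩
    simpa [wordLength] using Nat.sInf_le h0
  | succ k ih =>
    obtain ⟨l', hlen', hmem', hprod'⟩ := exists_min_word (pow_mem hf k)
    have : wordLength S (f ^ (k + 1)) ≤ l'.length + l.length := by
      refine Nat.sInf_le ⟨l' ++ l, by simp, ?_, by simp [hprod', hprod, pow_succ]⟩
      intro s hs
      rcases List.mem_append.1 hs with h | h
      · exact hmem' s h
      · exact hmem s h
    calc wordLength S (f ^ (k + 1)) ≤ l'.length + l.length := this
      _ = wordLength S (f ^ k) + wordLength S f := by rw [hlen', hlen]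
      _ ≤ k * wordLength S f + wordLength S f := by omega
      _ = (k + 1) * wordLength S f := by ring

theorem undistorted_of_semibounded {G : Type*} [Group G] (ψ : G → ℝ)
    (hsb : ∀ f : G, ∃ C : ℝ, ∀ g : G, |ψ g - ψ (f * g) + ψ f| ≤ C)
    (f : G)
    (hlim : 0 < Filter.atTop.limsup (fun k : ℕ => |ψ (f ^ k)| / k)) :
    ∀ S : Finset G, f ∈ Subgroup.closure (S : Set G) →
      0 < Filter.atTop.limsup (fun k : ℕ => (wordLength S (f ^ k) : ℝ) / k) := by
  classical
  intro S hfS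
  by_contra hcon
  push_neg at hcon
  set B : G → ℝ := fun g => Classical.choose (hsb g) with hB
  have hBspec : ∀ g h : G, |ψ h - ψ (g * h) + ψ g| ≤ B g := fun g => Classical.choose_spec (hsb g)
  have hBnn : ∀ g, 0 ≤ B g := fun g => le_trans (abs_nonneg _) (hBspec g 1)
  set T : Finset G := S ∪ S.image (·⁻¹) with hT
  set D : ℝ := 1 + ∑ t ∈ T, (B t + |ψ t|) with hD
  have hsumnn : (0:ℝ) ≤ ∑ t ∈ T, (B t + |ψ t|) :=
    Finset.sum_nonneg fun t _ => add_nonneg (hBnn t) (abs_nonneg _)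
  have hD1 : 1 ≤ D := by simpa [hD] using hsumnn
  have hD0 : (0:ℝ) < D := by linarith
  -- single step bound
  have hstep : ∀ s g : G, (s ∈ S ∨ s⁻¹ ∈ S) → |ψ (s * g)| ≤ |ψ g| + D := by
    intro s g hs
    have hsT : s ∈ T := by
      rcases hs with h | h
      · exact Finset.mem_union_left _ h
      · exact Finset.mem_union_right _ (Finset.mem_image.2 ⟨s⁻¹, h, inv_inv s⟩)
    have hle : B s + |ψ s| ≤ ∑ t ∈ T, (B t + |ψ t|) :=
      Finset.single_le_sum (fun t _ => add_nonneg (hBnn t) (abs_nonneg _)) hsT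
    have h1 := abs_le.1 (hBspec s g)
    have h2 := abs_le.1 (le_refl |ψ g|)
    rw [abs_le]
    constructor
    · nlinarith [le_abs_self (ψ g), neg_abs_le (ψ g), le_abs_self (ψ s), neg_abs_le (ψ s)]
    · nlinarith [le_abs_self (ψ g), neg_abs_le (ψ g), le_abs_self (ψ s), neg_abs_le (ψ s)]
  -- word bound
  have hlist : ∀ l : List G, (∀ s ∈ l, s ∈ S ∨ s⁻¹ ∈ S) →
      |ψ l.prod| ≤ D * l.length + |ψ 1| := by
    intro l
    induction l with
    | nil => intro _; simp
    | cons s l ih =>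
      intro h
      have h1 := ih fun t ht => h t (List.mem_cons_of_mem _ ht)
      have h2 := hstep s l.prod (h s List.mem_cons_self)
      simp only [List.prod_cons, List.length_cons]
      push_cast
      linarith
  have hbound : ∀ k : ℕ, |ψ (f ^ k)| ≤ D * (wordLength S (f ^ k)) + |ψ 1| := by
    intro k
    obtain ⟨l, hlen, hmem, hprod⟩ := exists_min_word (pow_mem hfS k)
    calc |ψ (f ^ k)| = |ψ l.prod| := by rw [hprod]
      _ ≤ D * l.length + |ψ 1| := hlist l hmem
      _ = D * (wordLength S (f ^ k)) + |ψ 1| := by rw [hlen]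
  set n : ℕ := wordLength S f with hn
  set u : ℕ → ℝ := fun k => (wordLength S (f ^ k) : ℝ) / k with hu
  set v : ℕ → ℝ := fun k => |ψ (f ^ k)| / k with hv
  have hub : ∀ k, u k ≤ n := by
    intro k
    rcases Nat.eq_zero_or_pos k with rfl | hk
    · simp [hu]
    · have hk' : (0:ℝ) < k := by exact_mod_cast hk
      rw [hu, div_le_iff₀ hk']
      have := wordLength_pow_le hfS k
      calc ((wordLength S (f ^ k) : ℝ)) ≤ (k * n : ℕ) := by exact_mod_cast this
        _ = n * k := by push_cast; ring
  have hu_bdd : Filter.IsBoundedUnder (· ≤ ·) Filter.atTop u :=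
    Filter.isBoundedUnder_of ⟨(n : ℝ), hub⟩
  -- limsup v ≤ ε for every ε > 0
  have key : ∀ ε : ℝ, 0 < ε → Filter.atTop.limsup v ≤ ε := by
    intro ε hε
    have hδ : Filter.atTop.limsup u < ε / (2 * D) :=
      lt_of_le_of_lt hcon (by positivity)
    have h1 : ∀ᶠ k in Filter.atTop, u k < ε / (2 * D) :=
      Filter.eventually_lt_of_limsup_lt hδ hu_bdd
    have h2 : ∀ᶠ k : ℕ in Filter.atTop, |ψ 1| / (k : ℝ) < ε / 2 :=
      (tendsto_const_div_atTop_nhds_zero_nat |ψ 1|).eventually_lt_const (by positivity)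
    have h3 : ∀ᶠ k in Filter.atTop, v k ≤ ε := by
      filter_upwards [h1, h2, Filter.eventually_ge_atTop 1] with k hk1 hk2 hk3
      have hk' : (0:ℝ) < k := by exact_mod_cast hk3
      have hb := hbound k
      have : v k ≤ D * u k + |ψ 1| / k := by
        rw [hv, hu]
        calc |ψ (f ^ k)| / k ≤ (D * (wordLength S (f ^ k)) + |ψ 1|) / k := by
              gcongr
          _ = D * ((wordLength S (f ^ k) : ℝ) / k) + |ψ 1| / k := by
              field_simp
      have hmul : D * u k ≤ D * (ε / (2 * D)) :=
        mul_le_mul_of_nonneg_left hk1.le hD0.le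
      have heq : D * (ε / (2 * D)) = ε / 2 := by
        field_simp
      linarith
    exact Filter.limsup_le_of_le
      (Filter.isCoboundedUnder_le_of_le Filter.atTop (x := (0:ℝ))
        (fun k => by positivity)) h3
  have hle0 : Filter.atTop.limsup v ≤ 0 :=
    le_of_forall_pos_le_add fun ε hε => by simpa using key ε hε
  exact absurd hlim (not_lt.2 hle0)
end

section
/- Let G be a group, H a normal subgroup of G, and φ : G → ℝ a homogeneous quasimorphism that vanishes on H (that is, φ(h) = 0 for all h ∈ H). Then φ(g h) = φ(g) for all g ∈ G and all h ∈ H. -/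
theorem homogeneous_qm_vanishing_on_normal {G : Type*} [Group G]
    (φ : G → ℝ) (D : ℝ)
    (hqm : ∀ a b : G, |φ (a * b) - φ a - φ b| ≤ D)
    (hhom : ∀ (g : G) (n : ℤ), φ (g ^ n) = (n : ℝ) * φ g)
    (H : Subgroup G) (hN : H.Normal)
    (hvanish : ∀ h ∈ H, φ h = 0) :
    ∀ (g : G), ∀ h ∈ H, φ (g * h) = φ g := by
  haveI := hN
  intro g h hh
  -- key bound: for all n : ℕ, |n * (φ (g*h) - φ g)| ≤ D
  have key : ∀ n : ℕ, (n : ℝ) * |φ (g * h) - φ g| ≤ D := by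
    intro n
    have hc : (g ^ (n : ℤ))⁻¹ * (g * h) ^ (n : ℤ) ∈ H := by
      rw [← QuotientGroup.eq]
      have : (↑g : G ⧸ H) = ↑(g * h) := by
        rw [QuotientGroup.eq]
        simpa using hh
      rw [QuotientGroup.mk_zpow, QuotientGroup.mk_zpow, this]
    set c := (g ^ (n : ℤ))⁻¹ * (g * h) ^ (n : ℤ) with hcdef
    have hmul : (g * h) ^ (n : ℤ) = g ^ (n : ℤ) * c := by
      rw [hcdef]; group
    have h1 := hqm (g ^ (n : ℤ)) c
    rw [← hmul, hhom (g * h) n, hhom g n, hvanish c hc] at h1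
    calc (n : ℝ) * |φ (g * h) - φ g| = |(n : ℝ) * φ (g * h) - (n : ℝ) * φ g - 0| := by
          rw [sub_zero, ← mul_sub, abs_mul, Nat.abs_cast]
      _ ≤ D := h1
  by_contra hne
  have hx : 0 < |φ (g * h) - φ g| := by
    rw [abs_pos, sub_ne_zero]
    exact hne
  obtain ⟨n, hn⟩ := exists_nat_gt (D / |φ (g * h) - φ g|)
  have := key n
  have : D / |φ (g * h) - φ g| < (n : ℝ) := hn
  have h2 : D < (n : ℝ) * |φ (g * h) - φ g| := by
    rwa [div_lt_iff₀ hx] at this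
  linarith [key n]
end

section
/- Let a group G act on a set X, let P be a group, let γ : G × X → P be a cocycle, and let φ : P → ℝ be a quasimorphism with defect at most D. Fix z ∈ X and define Ψ_z : G → ℝ by Ψ_z(f) = φ(γ(f, z)). Let f ∈ G and suppose B_f := sup_{x ∈ X} |φ(γ(f, x))| is finite. Then for every g ∈ G, |Ψ_z(g) − Ψ_z(f g) + Ψ_z(f)| ≤ 2·B_f + D; in particular the coboundary δΨ_z is a semi-bounded (1-bounded) 2-cocycle. -/
theorem semibounded_of_pointwise {G X P : Type*} [Group G] [MulAction G X] [Group P]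
    (γ : G → X → P)
    (hcoc : ∀ (f g : G) (x : X), γ (f * g) x = γ f (g • x) * γ g x)
    (φ : P → ℝ) (D : ℝ)
    (hqm : ∀ a b : P, |φ (a * b) - φ a - φ b| ≤ D)
    (z : X) (f : G)
    (hB : BddAbove (Set.range fun x : X => |φ (γ f x)|)) :
    ∀ g : G,
      |φ (γ g z) - φ (γ (f * g) z) + φ (γ f z)| ≤
        2 * sSup (Set.range fun x : X => |φ (γ f x)|) + D := by
  intro g
  set B := sSup (Set.range fun x : X => |φ (γ f x)|) with hBdef
  have h1 : |φ (γ f (g • z))| ≤ B := le_csSup hB ⟨g • z, rfl⟩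
  have h2 : |φ (γ f z)| ≤ B := le_csSup hB ⟨z, rfl⟩
  have h3 := hqm (γ f (g • z)) (γ g z)
  rw [← hcoc f g z] at h3
  have : |φ (γ g z) - φ (γ (f * g) z) + φ (γ f z)| ≤
      |φ (γ (f * g) z) - φ (γ f (g • z)) - φ (γ g z)| + |φ (γ f (g • z))| + |φ (γ f z)| := by
    have := abs_add_le (φ (γ g z) - φ (γ (f * g) z)) (φ (γ f z))
    calc |φ (γ g z) - φ (γ (f * g) z) + φ (γ f z)|
        = |(-(φ (γ (f * g) z) - φ (γ f (g • z)) - φ (γ g z))) + (-(φ (γ f (g • z)))) + φ (γ f z)| := by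
          ring_nf
      _ ≤ _ := by
          refine (abs_add_le _ _).trans (add_le_add_left ((abs_add_le _ _).trans ?_) _)
          rw [abs_neg, abs_neg]
    
  linarith
end

section
/- Let (X, μ) be a probability measure space, let a group G act on X by measurable maps, let P be a group, let γ : G × X → P be a cocycle, and let φ : P → ℝ be a quasimorphism with defect at most D. Assume that for every h ∈ G the function x ↦ φ(γ(h, x)) is measurable and A(h) := sup_{x ∈ X} |φ(γ(h, x))| is finite. Define Ψ : G → ℝ by Ψ(f) = ∫_X φ(γ(f, x)) dμ(x). Then for every f, g ∈ G, |Ψ(g) − Ψ(f g) + Ψ(f)| ≤ 2·A(f) + D; in particular the coboundary δΨ is a semi-bounded (1-bounded) 2-cocycle. -/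
open MeasureTheory

theorem semibounded_of_integral {G X P : Type*} [Group G] [MulAction G X] [Group P]
    [MeasurableSpace X] (μ : Measure X) [IsProbabilityMeasure μ]
    (hmeas_act : ∀ g : G, Measurable fun x : X => g • x)
    (γ : G → X → P)
    (hcoc : ∀ (f g : G) (x : X), γ (f * g) x = γ f (g • x) * γ g x)
    (φ : P → ℝ) (D : ℝ)
    (hqm : ∀ a b : P, |φ (a * b) - φ a - φ b| ≤ D)
    (hmeas : ∀ h : G, Measurable fun x : X => φ (γ h x))
    (hbdd : ∀ h : G, BddAbove (Set.range fun x : X => |φ (γ h x)|))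
    (Ψ : G → ℝ) (hΨ : ∀ f : G, Ψ f = ∫ x, φ (γ f x) ∂μ) :
    ∀ f g : G,
      |Ψ g - Ψ (f * g) + Ψ f| ≤
        2 * sSup (Set.range fun x : X => |φ (γ f x)|) + D := by
  intro f g
  set A := sSup (Set.range fun x : X => |φ (γ f x)|) with hAdef
  have hA : ∀ x : X, |φ (γ f x)| ≤ A := fun x => le_csSup (hbdd f) ⟨x, rfl⟩
  have int_h : ∀ h : G, Integrable (fun x => φ (γ h x)) μ := by
    intro h
    refine (integrable_const (sSup (Set.range fun x : X => |φ (γ h x)|))).mono'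
      (hmeas h).aestronglyMeasurable (ae_of_all _ fun x => ?_)
    simpa [Real.norm_eq_abs] using le_csSup (hbdd h) ⟨x, rfl⟩
  -- pointwise bound on the difference
  have hpt : ∀ x : X, |φ (γ g x) - φ (γ (f * g) x)| ≤ A + D := by
    intro x
    have h1 := hqm (γ f (g • x)) (γ g x)
    rw [← hcoc f g x] at h1
    have h2 := hA (g • x)
    calc |φ (γ g x) - φ (γ (f * g) x)|
        = |(-(φ (γ (f * g) x) - φ (γ f (g • x)) - φ (γ g x))) + (-(φ (γ f (g • x))))| := by
          ring_nf
      _ ≤ |(-(φ (γ (f * g) x) - φ (γ f (g • x)) - φ (γ g x)))| + |(-(φ (γ f (g • x))))| :=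
          abs_add_le _ _
      _ ≤ D + A := by
          rw [abs_neg, abs_neg]
          exact add_le_add h1 h2
      _ = A + D := by ring
  have hdiff : Ψ g - Ψ (f * g) = ∫ x, (φ (γ g x) - φ (γ (f * g) x)) ∂μ := by
    rw [hΨ, hΨ, integral_sub (int_h g) (int_h (f * g))]
  have hb1 : |Ψ g - Ψ (f * g)| ≤ A + D := by
    rw [hdiff]
    have := norm_integral_le_integral_norm (f := fun x => φ (γ g x) - φ (γ (f * g) x)) (μ := μ)
    simp only [Real.norm_eq_abs] at this
    refine this.trans ?_
    calc ∫ x, |φ (γ g x) - φ (γ (f * g) x)| ∂μ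
        ≤ ∫ _x, (A + D) ∂μ := by
          refine integral_mono ((int_h g).sub (int_h (f * g))).abs (integrable_const _) hpt
      _ = A + D := by simp [measure_univ]
  have hb2 : |Ψ f| ≤ A := by
    rw [hΨ]
    have := norm_integral_le_integral_norm (f := fun x => φ (γ f x)) (μ := μ)
    simp only [Real.norm_eq_abs] at this
    refine this.trans ?_
    calc ∫ x, |φ (γ f x)| ∂μ ≤ ∫ _x, A ∂μ := integral_mono (int_h f).abs (integrable_const _) hA
      _ = A := by simp [measure_univ]
  calc |Ψ g - Ψ (f * g) + Ψ f| ≤ |Ψ g - Ψ (f * g)| + |Ψ f| := abs_add_le _ _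
    _ ≤ (A + D) + A := add_le_add hb1 hb2
    _ = 2 * A + D := by ring
end

section
/- Let (X, μ) be a probability measure space, let a group G act on X by measurable measure-preserving maps, let P be a group, let γ : G × X → P be a cocycle, and let φ : P → ℝ be a quasimorphism with defect at most D. Assume that for every h ∈ G the function x ↦ φ(γ(h, x)) is measurable and sup_{x ∈ X} |φ(γ(h, x))| is finite. Define Ψ : G → ℝ by Ψ(f) = ∫_X φ(γ(f, x)) dμ(x). Then Ψ is a quasimorphism on G with defect at most D: for all f, g ∈ G, |Ψ(g) − Ψ(f g) + Ψ(f)| ≤ D. -/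
open MeasureTheory

theorem quasimorphism_of_integral {G X P : Type*} [Group G] [MulAction G X] [Group P]
    [MeasurableSpace X] (μ : Measure X) [IsProbabilityMeasure μ]
    (hmp : ∀ g : G, MeasurePreserving (fun x : X => g • x) μ μ)
    (γ : G → X → P)
    (hcoc : ∀ (f g : G) (x : X), γ (f * g) x = γ f (g • x) * γ g x)
    (φ : P → ℝ) (D : ℝ)
    (hqm : ∀ a b : P, |φ (a * b) - φ a - φ b| ≤ D)
    (hmeas : ∀ h : G, Measurable fun x : X => φ (γ h x))
    (hbdd : ∀ h : G, BddAbove (Set.range fun x : X => |φ (γ h x)|))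
    (Ψ : G → ℝ) (hΨ : ∀ f : G, Ψ f = ∫ x, φ (γ f x) ∂μ) :
    ∀ f g : G, |Ψ g - Ψ (f * g) + Ψ f| ≤ D := by
  intro f g
  have hint : ∀ h : G, Integrable (fun x => φ (γ h x)) μ := by
    intro h
    obtain ⟨C, hC⟩ := hbdd h
    exact Integrable.mono' (integrable_const C) (hmeas h).aestronglyMeasurable
      (Filter.Eventually.of_forall fun x => hC (Set.mem_range_self x))
  have h1 : ∫ x, φ (γ f x) ∂μ = ∫ x, φ (γ f (g • x)) ∂μ := by
    conv_lhs => rw [← (hmp g).map_eq]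
    rw [integral_map (hmp g).measurable.aemeasurable]
    rw [(hmp g).map_eq]
    exact (hmeas f).aestronglyMeasurable
  have hint2 : Integrable (fun x => φ (γ f (g • x))) μ := by
    have := (hint f)
    rw [← (hmp g).map_eq] at this
    exact this.comp_measurable (hmp g).measurable
  have key : Ψ g - Ψ (f * g) + Ψ f
      = ∫ x, (φ (γ g x) - φ (γ (f * g) x) + φ (γ f (g • x))) ∂μ := by
    rw [hΨ, hΨ, hΨ, h1, ← integral_sub (hint g) (hint (f * g)),
      ← integral_add (μ := μ) (f := fun x => φ (γ g x) - φ (γ (f * g) x))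
        (g := fun x => φ (γ f (g • x))) ((hint g).sub (hint (f * g))) hint2]
  rw [key]
  have hbound : ∀ x : X, ‖φ (γ g x) - φ (γ (f * g) x) + φ (γ f (g • x))‖ ≤ D := by
    intro x
    have := hqm (γ f (g • x)) (γ g x)
    rw [← hcoc] at this
    rw [Real.norm_eq_abs, ← abs_neg]
    convert this using 2
    ring
  calc |∫ x, (φ (γ g x) - φ (γ (f * g) x) + φ (γ f (g • x))) ∂μ|
      ≤ D * (μ Set.univ).toReal :=
        norm_integral_le_of_norm_le_const (Filter.Eventually.of_forall hbound)
    _ = D := by simp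
end

section
/- Let a group G act on a set X, let P be a group, let γ : G × X → P be a cocycle, and let φ : P → ℝ be a homogeneous quasimorphism. Assume that for every h ∈ G the quantity sup_{x ∈ X} |φ(γ(h, x))| is finite. Let f ∈ G and let z ∈ X be a fixed point of f (i.e. f·z = z) such that φ(γ(f, z)) > 0. Then f is undistorted in G: for every finite subset S ⊆ G whose generated subgroup contains f, limsup_{k→∞} |f^k|_S / k > 0. -/
theorem exists_list_rep {G : Type*} [Group G] {S : Finset G} {f : G}
    (h : f ∈ Subgroup.closure (S : Set G)) :
    ∃ l : List G, (∀ s ∈ l, s ∈ S ∨ s⁻¹ ∈ S) ∧ l.prod = f := by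
  have h' : f ∈ Submonoid.closure ((S : Set G) ∪ (S : Set G)⁻¹) := by
    rw [← Subgroup.closure_toSubmonoid]; exact h
  obtain ⟨l, hl1, hl2⟩ := Submonoid.exists_list_of_mem_closure h'
  refine ⟨l, fun s hs => ?_, hl2⟩
  rcases hl1 s hs with h | h
  · exact Or.inl h
  · exact Or.inr (by simpa using h)

theorem wordLength_spec {G : Type*} [Group G] {S : Finset G} {f : G}
    (h : f ∈ Subgroup.closure (S : Set G)) :
    ∃ l : List G, l.length = wordLength S f ∧ (∀ s ∈ l, s ∈ S ∨ s⁻¹ ∈ S) ∧ l.prod = f := by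
  obtain ⟨l, hl1, hl2⟩ := exists_list_rep h
  have : wordLength S f ∈ {m : ℕ | ∃ l : List G, l.length = m ∧
      (∀ s ∈ l, s ∈ S ∨ s⁻¹ ∈ S) ∧ l.prod = f} :=
    Nat.sInf_mem ⟨l.length, l, rfl, hl1, hl2⟩
  exact this

theorem undistorted_of_fixed_point {G X P : Type*} [Group G] [MulAction G X] [Group P]
    (γ : G → X → P)
    (hcoc : ∀ (f g : G) (x : X), γ (f * g) x = γ f (g • x) * γ g x)
    (φ : P → ℝ) (D : ℝ)
    (hqm : ∀ a b : P, |φ (a * b) - φ a - φ b| ≤ D)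
    (hhom : ∀ (p : P) (n : ℤ), φ (p ^ n) = (n : ℝ) * φ p)
    (hbdd : ∀ h : G, BddAbove (Set.range fun x : X => |φ (γ h x)|))
    (f : G) (z : X) (hz : f • z = z) (hpos : 0 < φ (γ f z)) :
    ∀ S : Finset G, f ∈ Subgroup.closure (S : Set G) →
      0 < Filter.atTop.limsup (fun k : ℕ => (wordLength S (f ^ k) : ℝ) / k) := by
  intro S hfS
  classical
  have hφ1 : φ (1 : P) = 0 := by simpa using hhom 1 0
  have hD : 0 ≤ D := by
    have := hqm 1 1
    rw [mul_one, hφ1] at this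
    simpa using this
  have hγ1 : ∀ x : X, γ 1 x = 1 := by
    intro x
    have h1 : γ (1 * 1 : G) x = γ 1 ((1 : G) • x) * γ 1 x := hcoc 1 1 x
    rw [mul_one, one_smul] at h1
    exact mul_eq_right.mp h1.symm
  -- the constant C
  set c : G → ℝ := fun h => sSup (Set.range fun x : X => |φ (γ h x)|) with hc
  have hcle : ∀ (h : G) (x : X), |φ (γ h x)| ≤ c h := fun h x =>
    le_csSup (hbdd h) ⟨x, rfl⟩
  have hc0 : ∀ h : G, 0 ≤ c h := fun h => le_trans (abs_nonneg _) (hcle h z)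
  set T : Finset G := S ∪ S.image (·⁻¹) with hT
  set C : ℝ := ∑ h ∈ T, c h with hC
  have hC0 : 0 ≤ C := Finset.sum_nonneg fun h _ => hc0 h
  have hcC : ∀ s : G, (s ∈ S ∨ s⁻¹ ∈ S) → c s ≤ C := by
    intro s hs
    have hsT : s ∈ T := by
      rcases hs with h | h
      · exact Finset.mem_union_left _ h
      · exact Finset.mem_union_right _ (Finset.mem_image.mpr ⟨s⁻¹, h, inv_inv s⟩)
    exact Finset.single_le_sum (fun h _ => hc0 h) hsT
  -- key estimate
  have key : ∀ l : List G, (∀ s ∈ l, s ∈ S ∨ s⁻¹ ∈ S) → ∀ x : X,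
      φ (γ l.prod x) ≤ l.length * (C + D) := by
    intro l
    induction l with
    | nil => intro _ x; simp [hγ1, hφ1]
    | cons s t ih =>
      intro hmem x
      have hs : s ∈ S ∨ s⁻¹ ∈ S := hmem s List.mem_cons_self
      have ht : ∀ u ∈ t, u ∈ S ∨ u⁻¹ ∈ S := fun u hu => hmem u (List.mem_cons_of_mem s hu)
      have hprod : (s :: t).prod = s * t.prod := List.prod_cons
      have h1 : γ (s * t.prod) x = γ s (t.prod • x) * γ t.prod x := hcoc s t.prod x
      have h2 : |φ (γ s (t.prod • x) * γ t.prod x) - φ (γ s (t.prod • x)) - φ (γ t.prod x)| ≤ D :=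
        hqm _ _
      have h3 : φ (γ s (t.prod • x)) ≤ C :=
        le_trans (le_trans (le_abs_self _) (hcle s _)) (hcC s hs)
      have h4 : φ (γ t.prod x) ≤ t.length * (C + D) := ih ht x
      have habs := abs_le.mp h2
      rw [hprod, h1]
      have : ((s :: t).length : ℝ) = t.length + 1 := by push_cast [List.length_cons]; ring
      simp only [List.length_cons]
      push_cast
      nlinarith [habs.2]
  -- the power cocycle
  have hpow : ∀ k : ℕ, γ (f ^ k) z = (γ f z) ^ k := by
    intro k
    induction k with
    | zero => simpa using hγ1 z
    | succ n ih =>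
      have : f ^ (n + 1) = f ^ n * f := pow_succ f n
      rw [this, hcoc (f ^ n) f z, hz, ih, pow_succ]
  have hφpow : ∀ k : ℕ, φ (γ (f ^ k) z) = k * φ (γ f z) := by
    intro k
    rw [hpow k]
    have := hhom (γ f z) (k : ℤ)
    rwa [zpow_natCast, Int.cast_natCast] at this
  -- word length lower bound
  set B : ℝ := C + D + 1 with hB
  have hBpos : 0 < B := by linarith
  have hlow : ∀ k : ℕ, (k : ℝ) * φ (γ f z) ≤ (wordLength S (f ^ k) : ℝ) * B := by
    intro k
    obtain ⟨l, hl0, hl1, hl2⟩ := wordLength_spec (Subgroup.pow_mem _ hfS k)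
    have := key l hl1 z
    rw [hl2] at this
    rw [← hφpow k] at *
    calc φ (γ (f ^ k) z) ≤ l.length * (C + D) := this
      _ ≤ l.length * B := by
          apply mul_le_mul_of_nonneg_left (by linarith) (by positivity)
      _ = (wordLength S (f ^ k) : ℝ) * B := by rw [← hl0]
  -- word length upper bound (for boundedness of the limsup function)
  obtain ⟨l0, hl01, hl02⟩ := exists_list_rep hfS
  have hub : ∀ k : ℕ, (wordLength S (f ^ k) : ℕ) ≤ k * l0.length := by
    intro k
    apply Nat.sInf_le
    refine ⟨(List.replicate k l0).flatten, ?_, ?_, ?_⟩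
    · simp [List.length_flatten, Nat.mul_comm]
    · intro s hs
      rw [List.mem_flatten] at hs
      obtain ⟨m, hm1, hm2⟩ := hs
      rw [List.mem_replicate] at hm1
      exact hl01 s (hm1.2 ▸ hm2)
    · rw [List.prod_flatten]
      simp [hl02, List.prod_replicate]
  have hbound : ∀ k : ℕ, (wordLength S (f ^ k) : ℝ) / k ≤ (l0.length : ℝ) := by
    intro k
    rcases Nat.eq_zero_or_pos k with rfl | hk
    · simp
    · rw [div_le_iff₀ (by exact_mod_cast hk)]
      calc (wordLength S (f ^ k) : ℝ) ≤ (k * l0.length : ℕ) := by exact_mod_cast hub k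
        _ = (l0.length : ℝ) * k := by push_cast; ring
  set ε : ℝ := φ (γ f z) / B with hε
  have hεpos : 0 < ε := div_pos hpos hBpos
  have hfreq : ∃ᶠ k : ℕ in Filter.atTop, ε ≤ (wordLength S (f ^ k) : ℝ) / (k : ℝ) := by
    apply Filter.Eventually.frequently
    filter_upwards [Filter.eventually_ge_atTop (1:ℕ)] with k hk
    have hkpos : (0 : ℝ) < k := by exact_mod_cast Nat.lt_of_lt_of_le Nat.zero_lt_one hk
    rw [hε, div_le_div_iff₀ hBpos hkpos]
    have := hlow k
    linarith [this]
  have hbdd' : Filter.IsBoundedUnder (· ≤ ·) Filter.atTop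
      (fun k : ℕ => (wordLength S (f ^ k) : ℝ) / k) :=
    Filter.isBoundedUnder_of ⟨(l0.length : ℝ), hbound⟩
  exact lt_of_lt_of_le hεpos (Filter.le_limsup_of_frequently_le hfreq hbdd')
end

section
/- Let a group G act on a set X, let P be a group, let γ : G × X → P be a cocycle, and let φ : P → ℝ be a homogeneous quasimorphism. Assume that for every h ∈ G the quantity sup_{y ∈ X} |φ(γ(h, y))| is finite. Let f ∈ G and x ∈ X be such that there is a strictly increasing sequence (n_k) of positive integers with γ(f^{n_k}, x) = γ(f, x)^{n_k} for every k. If φ(γ(f, x)) > 0, then f is undistorted in G: for every finite subset S ⊆ G whose generated subgroup contains f, limsup_{k→∞} |f^k|_S / k > 0. -/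
lemma wordSet_nonempty {G : Type*} [Group G] {S : Finset G} {f : G}
    (hf : f ∈ Subgroup.closure (S : Set G)) :
    {m : ℕ | ∃ l : List G, l.length = m ∧ (∀ s ∈ l, s ∈ S ∨ s⁻¹ ∈ S) ∧ l.prod = f}.Nonempty := by
  have hf' : f ∈ Submonoid.closure ((S : Set G) ∪ (S : Set G)⁻¹) := by
    rw [← Subgroup.closure_toSubmonoid]; exact hf
  obtain ⟨l, hl1, hl2⟩ := Submonoid.exists_list_of_mem_closure hf'
  refine ⟨l.length, l, rfl, ?_, hl2⟩
  intro s hs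
  rcases hl1 s hs with h | h
  · exact Or.inl h
  · exact Or.inr (by simpa using h)

lemma exists_min_list {G : Type*} [Group G] {S : Finset G} {f : G}
    (hf : f ∈ Subgroup.closure (S : Set G)) :
    ∃ l : List G, l.length = wordLength S f ∧ (∀ s ∈ l, s ∈ S ∨ s⁻¹ ∈ S) ∧ l.prod = f :=
  Nat.sInf_mem (wordSet_nonempty hf)

theorem undistorted_of_recurrent_powers {G X P : Type*} [Group G] [MulAction G X] [Group P]
    (γ : G → X → P)
    (hcoc : ∀ (f g : G) (x : X), γ (f * g) x = γ f (g • x) * γ g x)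
    (φ : P → ℝ) (D : ℝ)
    (hqm : ∀ a b : P, |φ (a * b) - φ a - φ b| ≤ D)
    (hhom : ∀ (p : P) (n : ℤ), φ (p ^ n) = (n : ℝ) * φ p)
    (hbdd : ∀ h : G, BddAbove (Set.range fun y : X => |φ (γ h y)|))
    (f : G) (x : X) (n : ℕ → ℕ) (hmono : StrictMono n) (hpos : ∀ k, 0 < n k)
    (hn : ∀ k : ℕ, γ (f ^ n k) x = (γ f x) ^ n k)
    (hφpos : 0 < φ (γ f x)) :
    ∀ S : Finset G, f ∈ Subgroup.closure (S : Set G) →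
      0 < Filter.atTop.limsup (fun k : ℕ => (wordLength S (f ^ k) : ℝ) / k) := by
  classical
  intro S hfS
  -- basic facts
  have hφ1 : φ (1 : P) = 0 := by simpa using hhom 1 0
  have hγ1 : ∀ y : X, γ 1 y = 1 := by
    intro y
    have h := hcoc 1 1 y
    rw [one_mul, one_smul] at h
    exact (left_eq_mul.mp h)
  have hD0 : 0 ≤ D := by
    have := hqm 1 1
    simp [hφ1] at this
    linarith
  -- the sup bound function
  set c : G → ℝ := fun g => sSup (Set.range fun y : X => |φ (γ g y)|) with hc_def
  have hc : ∀ (g : G) (y : X), |φ (γ g y)| ≤ c g := fun g y => le_csSup (hbdd g) ⟨y, rfl⟩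
  -- S is nonempty
  have hSne : S.Nonempty := by
    rcases S.eq_empty_or_nonempty with h | h
    · exfalso
      rw [h] at hfS
      simp [Subgroup.closure_empty] at hfS
      rw [hfS, hγ1, hφ1] at hφpos
      exact lt_irrefl 0 hφpos
    · exact h
  set T : Finset G := S ∪ S.image (·⁻¹) with hT_def
  have hTne : T.Nonempty := hSne.mono Finset.subset_union_left
  set K : ℝ := T.sup' hTne c with hK_def
  have hK : ∀ s : G, (s ∈ S ∨ s⁻¹ ∈ S) → c s ≤ K := by
    intro s hs
    refine Finset.le_sup' c ?_
    rcases hs with h | h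
    · exact Finset.mem_union_left _ h
    · refine Finset.mem_union_right _ ?_
      exact Finset.mem_image.mpr ⟨s⁻¹, h, by simp⟩
  -- quasimorphism of product bound
  have habs : ∀ a b : P, |φ (a * b)| ≤ |φ a| + |φ b| + D := by
    intro a b
    have h1 := hqm a b
    have h2 : |φ (a * b)| ≤ |φ (a * b) - φ a - φ b| + |φ a + φ b| := by
      calc |φ (a * b)| = |(φ (a * b) - φ a - φ b) + (φ a + φ b)| := by congr 1; ring
        _ ≤ |φ (a * b) - φ a - φ b| + |φ a + φ b| := abs_add_le _ _
    have h3 := abs_add_le (φ a) (φ b)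
    linarith
  -- key induction
  have key : ∀ l : List G, (∀ s ∈ l, s ∈ S ∨ s⁻¹ ∈ S) → ∀ y : X,
      |φ (γ l.prod y)| ≤ l.length * (K + D) := by
    intro l
    induction l with
    | nil => intro _ y; simp [hγ1 y, hφ1]
    | cons s l ih =>
      intro h y
      have hs := h s (List.mem_cons_self)
      have hl := fun t ht => h t (List.mem_cons_of_mem _ ht)
      have hstep : γ (s * l.prod) y = γ s (l.prod • y) * γ l.prod y := hcoc s l.prod y
      have h1 : |φ (γ (s :: l).prod y)| ≤ |φ (γ s (l.prod • y))| + |φ (γ (l.prod) y)| + D := by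
        rw [List.prod_cons, hstep]; exact habs _ _
      have h2 : |φ (γ s (l.prod • y))| ≤ K := le_trans (hc s _) (hK s hs)
      have h3 := ih hl y
      have : ((s :: l).length : ℝ) = l.length + 1 := by push_cast [List.length_cons]; ring
      rw [this]
      nlinarith [h1, h2, h3]
  -- main inequality along the subsequence
  have hmain : ∀ k : ℕ, (n k : ℝ) * φ (γ f x) ≤ (wordLength S (f ^ n k) : ℝ) * (K + D) := by
    intro k
    have hmem : f ^ n k ∈ Subgroup.closure (S : Set G) := pow_mem hfS _
    obtain ⟨l, hlen, hlmem, hlprod⟩ := exists_min_list hmem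
    have heq : φ (γ (f ^ n k) x) = (n k : ℝ) * φ (γ f x) := by
      rw [hn k]
      have := hhom (γ f x) (n k : ℤ)
      rwa [zpow_natCast, Int.cast_natCast] at this
    calc (n k : ℝ) * φ (γ f x) = φ (γ (f ^ n k) x) := heq.symm
      _ ≤ |φ (γ (f ^ n k) x)| := le_abs_self _
      _ = |φ (γ l.prod x)| := by rw [hlprod]
      _ ≤ l.length * (K + D) := key l hlmem x
      _ = (wordLength S (f ^ n k) : ℝ) * (K + D) := by rw [hlen]
  -- K + D > 0
  have hKD : 0 < K + D := by
    by_contra hcon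
    push_neg at hcon
    have h1 := hmain 0
    have h2 : (0 : ℝ) < (n 0 : ℝ) * φ (γ f x) :=
      mul_pos (by exact_mod_cast hpos 0) hφpos
    have h3 : (wordLength S (f ^ n 0) : ℝ) * (K + D) ≤ 0 :=
      mul_nonpos_of_nonneg_of_nonpos (Nat.cast_nonneg _) hcon
    linarith
  set ε : ℝ := φ (γ f x) / (K + D) with hε_def
  have hε : 0 < ε := div_pos hφpos hKD
  -- frequently bound
  have hfreq : ∀ j : ℕ, ε ≤ (wordLength S (f ^ n j) : ℝ) / (n j) := by
    intro j
    rw [hε_def, div_le_div_iff₀ hKD (by exact_mod_cast hpos j)]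
    have := hmain j
    linarith [hmain j]
  have hfr : ∃ᶠ k : ℕ in Filter.atTop, ε ≤ (wordLength S (f ^ k) : ℝ) / (k : ℝ) :=
    (hmono.tendsto_atTop).frequently (Filter.Frequently.of_forall hfreq)
  -- boundedness
  have hbd : Filter.IsBoundedUnder (· ≤ ·) Filter.atTop
      (fun k : ℕ => (wordLength S (f ^ k) : ℝ) / k) := by
    refine Filter.isBoundedUnder_of ⟨(wordLength S f : ℝ), fun k => ?_⟩
    rcases Nat.eq_zero_or_pos k with hk | hk
    · simp [hk]
    · rw [div_le_iff₀ (by exact_mod_cast hk)]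
      have := wordLength_pow_le hfS k
      calc (wordLength S (f ^ k) : ℝ) ≤ (k * wordLength S f : ℕ) := by exact_mod_cast this
        _ = (wordLength S f : ℝ) * k := by push_cast; ring
  calc (0 : ℝ) < ε := hε
    _ ≤ _ := Filter.le_limsup_of_frequently_le hfr hbd
end

section
/- Let (X, μ) be a probability measure space, let a group G act on X by measurable measure-preserving maps, let P be a group, let γ : G × X → P be a cocycle, and let φ : P → ℝ be a quasimorphism. Assume that for every h ∈ G the function x ↦ φ(γ(h, x)) is measurable and sup_{x ∈ X} |φ(γ(h, x))| is finite, and define Ψ : G → ℝ by Ψ(f) = ∫_X φ(γ(f, x)) dμ(x). If f ∈ G satisfies limsup_{k→∞} |Ψ(f^k)|/k > 0, then f is undistorted in G: for every finite subset S ⊆ G whose generated subgroup contains f, limsup_{k→∞} |f^k|_S / k > 0. -/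
open MeasureTheory

theorem undistorted_of_limsup_integral {G X P : Type*} [Group G] [MulAction G X] [Group P]
    [MeasurableSpace X] (μ : Measure X) [IsProbabilityMeasure μ]
    (hmp : ∀ g : G, MeasurePreserving (fun x : X => g • x) μ μ)
    (γ : G → X → P)
    (hcoc : ∀ (f g : G) (x : X), γ (f * g) x = γ f (g • x) * γ g x)
    (φ : P → ℝ) (D : ℝ)
    (hqm : ∀ a b : P, |φ (a * b) - φ a - φ b| ≤ D)
    (hmeas : ∀ h : G, Measurable fun x : X => φ (γ h x))
    (hbdd : ∀ h : G, BddAbove (Set.range fun x : X => |φ (γ h x)|))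
    (Ψ : G → ℝ) (hΨ : ∀ f : G, Ψ f = ∫ x, φ (γ f x) ∂μ)
    (f : G)
    (hlim : 0 < Filter.atTop.limsup (fun k : ℕ => |Ψ (f ^ k)| / k)) :
    ∀ S : Finset G, f ∈ Subgroup.closure (S : Set G) →
      0 < Filter.atTop.limsup (fun k : ℕ => (wordLength S (f ^ k) : ℝ) / k) := by
  intro S hfS
  have hD0 : 0 ≤ D := le_trans (abs_nonneg _) (hqm 1 1)
  -- the cocycle at 1 is trivial
  have hγ1 : ∀ x : X, γ 1 x = 1 := by
    intro x
    have h := hcoc 1 1 x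
    rw [one_mul, one_smul] at h
    exact right_eq_mul.mp h
  -- integrability
  have hint : ∀ h : G, Integrable (fun x => φ (γ h x)) μ := by
    intro h
    obtain ⟨C, hC⟩ := hbdd h
    refine (integrable_const C).mono' (hmeas h).aestronglyMeasurable ?_
    exact Filter.Eventually.of_forall fun x => by
      simpa [Real.norm_eq_abs] using hC (Set.mem_range_self x)
  -- Ψ is a quasimorphism with the same defect
  have hΨqm : ∀ g h : G, |Ψ (g * h) - Ψ g - Ψ h| ≤ D := by
    intro g h
    have hmA : Measurable (fun x : X => φ (γ g (h • x))) := (hmeas g).comp (hmp h).measurable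
    have hintA : Integrable (fun x : X => φ (γ g (h • x))) μ := by
      obtain ⟨C, hC⟩ := hbdd g
      refine (integrable_const C).mono' hmA.aestronglyMeasurable ?_
      exact Filter.Eventually.of_forall fun x => by
        simpa [Real.norm_eq_abs] using hC (Set.mem_range_self (h • x))
    have hA : ∫ x, φ (γ g (h • x)) ∂μ = ∫ x, φ (γ g x) ∂μ := by
      have h1 := integral_map (f := fun x : X => φ (γ g x))
        (hmp h).measurable.aemeasurable
        (by rw [(hmp h).map_eq]; exact (hmeas g).aestronglyMeasurable)
      rw [(hmp h).map_eq] at h1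
      exact h1.symm
    have hintFA : Integrable (fun x : X => φ (γ (g * h) x) - φ (γ g (h • x))) μ :=
      (hint (g * h)).sub hintA
    have key : ∫ x, (φ (γ (g * h) x) - φ (γ g (h • x)) - φ (γ h x)) ∂μ
        = Ψ (g * h) - Ψ g - Ψ h := by
      rw [integral_sub hintFA (hint h),
        integral_sub (hint (g * h)) hintA, hA, hΨ, hΨ, hΨ]
    rw [← key, ← Real.norm_eq_abs]
    have hb : ∀ x : X, ‖φ (γ (g * h) x) - φ (γ g (h • x)) - φ (γ h x)‖ ≤ D := by
      intro x
      rw [hcoc g h x]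
      simpa [Real.norm_eq_abs] using hqm (γ g (h • x)) (γ h x)
    calc ‖∫ x, (φ (γ (g * h) x) - φ (γ g (h • x)) - φ (γ h x)) ∂μ‖
        ≤ D * (μ Set.univ).toReal :=
          norm_integral_le_of_norm_le_const (Filter.Eventually.of_forall hb)
      _ = D := by simp
  -- |Ψ 1| ≤ D
  have hΨ1 : |Ψ 1| ≤ D := by
    have h1 : Ψ 1 = φ 1 := by
      rw [hΨ]; simp [hγ1]
    rw [h1]
    have h2 := hqm 1 1
    rw [mul_one] at h2
    calc |φ 1| = |φ 1 - φ 1 - φ 1| := by rw [abs_sub_comm]; congr 1; ring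
      _ ≤ D := h2
  set C : ℝ := S.sum (fun s => |Ψ s| + |Ψ s⁻¹|) with hCdef
  have hC0 : 0 ≤ C := Finset.sum_nonneg fun s _ => by positivity
  have hCb : ∀ s : G, (s ∈ S ∨ s⁻¹ ∈ S) → |Ψ s| ≤ C := by
    rintro s (hs | hs)
    · calc |Ψ s| ≤ |Ψ s| + |Ψ s⁻¹| := le_add_of_nonneg_right (abs_nonneg _)
        _ ≤ C := Finset.single_le_sum (f := fun s => |Ψ s| + |Ψ s⁻¹|)
            (fun s _ => by positivity) hs
    · calc |Ψ s| ≤ |Ψ s⁻¹| + |Ψ s⁻¹⁻¹| := by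
            rw [inv_inv]; exact le_add_of_nonneg_left (abs_nonneg _)
        _ ≤ C := Finset.single_le_sum (f := fun s => |Ψ s| + |Ψ s⁻¹|)
            (fun s _ => by positivity) hs
  -- bound along words
  have hlist : ∀ l : List G, (∀ s ∈ l, s ∈ S ∨ s⁻¹ ∈ S) →
      |Ψ l.prod| ≤ l.length * (C + D) + D := by
    intro l
    induction l with
    | nil => intro _; simpa using hΨ1
    | cons a t ih =>
      intro hmem
      have ha : |Ψ a| ≤ C := hCb a (hmem a (List.mem_cons_self))
      have ht : |Ψ t.prod| ≤ t.length * (C + D) + D :=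
        ih fun s hs => hmem s (List.mem_cons_of_mem a hs)
      have hq := hΨqm a t.prod
      have habs : |Ψ (a * t.prod)| ≤ |Ψ (a * t.prod) - Ψ a - Ψ t.prod| + |Ψ a| + |Ψ t.prod| := by
        calc |Ψ (a * t.prod)| = |Ψ (a * t.prod) - Ψ a - Ψ t.prod + Ψ a + Ψ t.prod| := by
              congr 1; ring
          _ ≤ |Ψ (a * t.prod) - Ψ a - Ψ t.prod + Ψ a| + |Ψ t.prod| := abs_add_le _ _
          _ ≤ |Ψ (a * t.prod) - Ψ a - Ψ t.prod| + |Ψ a| + |Ψ t.prod| := by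
              gcongr; exact abs_add_le _ _
      simp only [List.prod_cons, List.length_cons]
      push_cast
      nlinarith [habs, hq, ha, ht]
  -- a word for f
  have hf' : f ∈ Submonoid.closure ((S : Set G) ∪ (S : Set G)⁻¹) := by
    rw [← Subgroup.closure_toSubmonoid]
    exact hfS
  obtain ⟨l₀, hl₀mem, hl₀prod⟩ := Submonoid.exists_list_of_mem_closure hf'
  have hl₀mem' : ∀ s ∈ l₀, s ∈ S ∨ s⁻¹ ∈ S := by
    intro s hs
    rcases hl₀mem s hs with h | h
    · exact Or.inl (by exact_mod_cast h)
    · exact Or.inr (by simpa using h)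
  set W : ℕ → ℕ := fun k => wordLength S (f ^ k) with hWdef
  -- a word for f^k of length k * l₀.length
  have hwit : ∀ k : ℕ, ∃ l : List G, l.length = k * l₀.length ∧
      (∀ s ∈ l, s ∈ S ∨ s⁻¹ ∈ S) ∧ l.prod = f ^ k := by
    intro k
    refine ⟨(List.replicate k l₀).flatten, ?_, ?_, ?_⟩
    · simp [List.length_flatten, List.map_replicate, List.sum_replicate, mul_comm]
    · intro s hs
      rw [List.mem_flatten] at hs
      obtain ⟨l', hl', hsl'⟩ := hs
      rw [List.eq_of_mem_replicate hl'] at hsl'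
      exact hl₀mem' s hsl'
    · rw [List.prod_flatten, List.map_replicate, List.prod_replicate, hl₀prod]
  have hWle : ∀ k : ℕ, W k ≤ k * l₀.length := by
    intro k
    exact Nat.sInf_le (hwit k)
  have hWne : ∀ k : ℕ, ∃ l : List G, l.length = W k ∧
      (∀ s ∈ l, s ∈ S ∨ s⁻¹ ∈ S) ∧ l.prod = f ^ k := by
    intro k
    have hne : {m : ℕ | ∃ l : List G, l.length = m ∧ (∀ s ∈ l, s ∈ S ∨ s⁻¹ ∈ S) ∧
        l.prod = f ^ k}.Nonempty := ⟨k * l₀.length, hwit k⟩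
    exact Nat.sInf_mem hne
  have hΨk : ∀ k : ℕ, |Ψ (f ^ k)| ≤ (W k : ℝ) * (C + D) + D := by
    intro k
    obtain ⟨l, hlen, hmem, hprod⟩ := hWne k
    have := hlist l hmem
    rw [hprod, hlen] at this
    exact this
  -- the limsup argument
  by_contra hcon
  push_neg at hcon
  have hbound : ∀ k : ℕ, (W k : ℝ) / k ≤ (l₀.length : ℝ) := by
    intro k
    rcases Nat.eq_zero_or_pos k with rfl | hk
    · simp
    · rw [div_le_iff₀ (by exact_mod_cast hk : (0:ℝ) < k)]
      calc (W k : ℝ) ≤ (k * l₀.length : ℕ) := by exact_mod_cast hWle k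
        _ = (l₀.length : ℝ) * k := by push_cast; ring
  have hbddW : Filter.IsBoundedUnder (· ≤ ·) Filter.atTop (fun k : ℕ => (W k : ℝ) / k) :=
    Filter.isBoundedUnder_of ⟨(l₀.length : ℝ), fun k => hbound k⟩
  have htend0 : Filter.Tendsto (fun k : ℕ => (W k : ℝ) / k) Filter.atTop (nhds 0) := by
    rw [NormedAddCommGroup.tendsto_nhds_zero]
    intro ε hε
    have hev := Filter.eventually_lt_of_limsup_lt (lt_of_le_of_lt hcon hε) hbddW
    filter_upwards [hev] with k hk
    rw [Real.norm_eq_abs, abs_of_nonneg (by positivity)]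
    exact hk
  have hUb : ∀ k : ℕ, |Ψ (f ^ k)| / k ≤ (C + D) * ((W k : ℝ) / k) + D * (1 / k) := by
    intro k
    rcases Nat.eq_zero_or_pos k with rfl | hk
    · simp
    · have hk' : (0:ℝ) < k := by exact_mod_cast hk
      calc |Ψ (f ^ k)| / k ≤ ((W k : ℝ) * (C + D) + D) / k := by
            exact div_le_div_of_nonneg_right (hΨk k) hk'.le
        _ = (C + D) * ((W k : ℝ) / k) + D * (1 / k) := by field_simp
  have hg : Filter.Tendsto (fun k : ℕ => (C + D) * ((W k : ℝ) / k) + D * (1 / k))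
      Filter.atTop (nhds 0) := by
    have h1 := htend0.const_mul (C + D)
    have h2 := (tendsto_one_div_atTop_nhds_zero_nat).const_mul D
    simpa using h1.add h2
  have hu : Filter.Tendsto (fun k : ℕ => |Ψ (f ^ k)| / k) Filter.atTop (nhds 0) := by
    refine tendsto_of_tendsto_of_tendsto_of_le_of_le tendsto_const_nhds hg
      (fun k => by positivity) hUb
  rw [hu.limsup_eq] at hlim
  exact lt_irrefl _ hlim
end
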